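/- If X ⊂ ℝ is δ-regular with constant C_R on scales α_min to α_max and δ < 1, then X is ν-porous on scales C·α_min to α_max, where ν > 0 and C depend only on δ and C_R. Specifically, one may take any integer T with T^{1-δ} > 6 C_R², ν = (3T)^{-1}, and C = 3T. -/

import Mathlib

open MeasureTheory

/-- `X` is `ν`-porous on scales `amin` to `amax`: every interval `[a,b]` with
`amin ≤ b - a ≤ amax` contains a subinterval of length `ν(b-a)` disjoint from `X`. -/
def IsPorous (X : Set ℝ) (ν amin amax : ℝ) : Prop :=
  ∀ a b : ℝ, a < b → amin ≤ b - a → b - a ≤ amax →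
    ∃ c d : ℝ, a ≤ c ∧ d ≤ b ∧ d - c = ν * (b - a) ∧ X ∩ Set.Icc c d = ∅

/-!
Cut `[a, b]` into `3T` intervals of length `ℓ = (b - a) / (3T)`. If `X` met the middle one and
the middle interval of each of the `T` consecutive blocks of three, the points found in the blocks
would be `ℓ`-separated, so the intervals of length `ℓ` centred at them are disjoint, each of
measure at least `C_R⁻¹ ℓ^δ`, and all lie in the interval of length `b - a` centred at the point
found in the middle of `[a, b]`, of measure at most `C_R (3Tℓ)^δ ≤ 3 C_R T^δ ℓ^δ`.
Comparing gives `T^{1-δ} ≤ 3 C_R²`, against the choice of `T`.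
-/

open Set ENNReal Function

theorem MeasureTheory.card_mul_le_measure_of_pairwise_disjoint {α ι : Type*}
    [MeasurableSpace α] [Fintype ι] (μ : Measure α) {E : ι → Set α} {F : Set α} {c : ℝ≥0∞}
    (hE : ∀ i, MeasurableSet (E i)) (hd : Pairwise (Disjoint on E)) (hEF : ∀ i, E i ⊆ F)
    (hc : ∀ i, c ≤ μ (E i)) : Fintype.card ι * c ≤ μ F :=
  calc (Fintype.card ι : ℝ≥0∞) * c = ∑ _i : ι, c := by simp
    _ ≤ ∑ i, μ (E i) := Finset.sum_le_sum fun i _ ↦ hc i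
    _ = ∑' i, μ (E i) := (tsum_fintype _).symm
    _ ≤ μ (⋃ i, E i) := tsum_meas_le_meas_iUnion_of_disjoint μ hE hd
    _ ≤ μ F := measure_mono (iUnion_subset hEF)

theorem Real.disjoint_Icc_of_lt_abs_sub {x y r : ℝ} (h : 2 * r < |x - y|) :
    Disjoint (Icc (x - r) (x + r)) (Icc (y - r) (y + r)) := by
  refine Set.disjoint_left.mpr fun z hzx hzy ↦ h.not_ge ?_
  rw [abs_le]
  constructor <;> linarith [hzx.1, hzx.2, hzy.1, hzy.2]

theorem Real.lt_abs_sub_of_mem_Icc_add_three_mul {a ℓ u v : ℝ} {i j : ℕ} (hℓ : 0 < ℓ)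
    (hij : i ≠ j) (hu : u ∈ Icc (a + 3 * i * ℓ) (a + 3 * i * ℓ + ℓ))
    (hv : v ∈ Icc (a + 3 * j * ℓ) (a + 3 * j * ℓ + ℓ)) : ℓ < |u - v| := by
  wlog hlt : i < j generalizing i j u v
  · rw [abs_sub_comm]
    exact this hij.symm hv hu (hij.symm.lt_of_le (not_lt.mp hlt))
  have hij' : (i : ℝ) + 1 ≤ j := by exact_mod_cast hlt
  rw [abs_sub_comm]
  refine lt_of_lt_of_le ?_ (le_abs_self _)
  nlinarith [hu.2, hv.1]

theorem Nat.one_le_cast_of_lt_rpow {T : ℕ} {p c : ℝ} (hp : p ≠ 0) (hc : 0 ≤ c)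
    (h : c < (T : ℝ) ^ p) : 1 ≤ (T : ℝ) := by
  refine Nat.one_le_cast.mpr (Nat.pos_of_ne_zero fun hT ↦ ?_)
  rw [hT, Nat.cast_zero, Real.zero_rpow hp] at h
  exact h.not_ge hc

theorem Real.rpow_one_sub_le_three_mul_sq {C T ℓ δ : ℝ} (hC : 0 < C) (hT : 0 < T) (hℓ : 0 < ℓ)
    (hδ : δ ≤ 1) (h : T * (C⁻¹ * ℓ ^ δ) ≤ C * (3 * T * ℓ) ^ δ) : T ^ (1 - δ) ≤ 3 * C ^ 2 := by
  have h3 : (3 : ℝ) ^ δ ≤ 3 := by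
    simpa using Real.rpow_le_rpow_of_exponent_le (by norm_num : (1 : ℝ) ≤ 3) hδ
  rw [Real.mul_rpow (by positivity) hℓ.le, Real.mul_rpow (by norm_num) hT.le] at h
  have hTle : T ≤ C ^ 2 * 3 ^ δ * T ^ δ := by
    refine le_of_mul_le_mul_right ?_ (Real.rpow_pos_of_pos hℓ δ)
    calc T * ℓ ^ δ = C * (T * (C⁻¹ * ℓ ^ δ)) := by field_simp
      _ ≤ C * (C * (3 ^ δ * T ^ δ * ℓ ^ δ)) := by gcongr
      _ = C ^ 2 * 3 ^ δ * T ^ δ * ℓ ^ δ := by ring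
  rw [Real.rpow_sub hT, Real.rpow_one, div_le_iff₀ (Real.rpow_pos_of_pos hT δ)]
  calc T ≤ C ^ 2 * 3 ^ δ * T ^ δ := hTle
    _ ≤ C ^ 2 * 3 * T ^ δ := by gcongr
    _ = 3 * C ^ 2 * T ^ δ := by ring

def IsRegularOnScales (X : Set ℝ) (μ : Measure ℝ) (δ C amin amax : ℝ) : Prop :=
  ∀ x ∈ X, ∀ r : ℝ, 0 < r → amin ≤ 2 * r → 2 * r ≤ amax →
    ENNReal.ofReal (C⁻¹ * (2 * r) ^ δ) ≤ μ (Icc (x - r) (x + r)) ∧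
    μ (Icc (x - r) (x + r)) ≤ ENNReal.ofReal (C * (2 * r) ^ δ)

theorem IsRegularOnScales.natCast_card_mul_le {X : Set ℝ} {μ : Measure ℝ} {δ C amin amax : ℝ}
    (h : IsRegularOnScales X μ δ C amin amax) (hC : 0 ≤ C)
    {ι : Type*} [Fintype ι] {x : ι → ℝ} {y ℓ L : ℝ} (hx : ∀ i, x i ∈ X) (hy : y ∈ X)
    (hℓ : 0 < ℓ) (hℓmin : amin ≤ ℓ) (hℓL : ℓ ≤ L) (hL : L ≤ amax)
    (hsep : Pairwise fun i j ↦ ℓ < |x i - x j|) (hclose : ∀ i, |x i - y| ≤ (L - ℓ) / 2) :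
    Fintype.card ι * (C⁻¹ * ℓ ^ δ) ≤ C * L ^ δ := by
  have hlower : ∀ i, ENNReal.ofReal (C⁻¹ * ℓ ^ δ) ≤ μ (Icc (x i - ℓ / 2) (x i + ℓ / 2)) :=
    fun i ↦ by
      simpa only [mul_div_cancel₀ ℓ two_ne_zero] using
        (h (x i) (hx i) (ℓ / 2) (half_pos hℓ) (by linarith) (by linarith)).1
  have hupper : μ (Icc (y - L / 2) (y + L / 2)) ≤ ENNReal.ofReal (C * L ^ δ) := by
    simpa only [mul_div_cancel₀ L two_ne_zero] using
      (h y hy (L / 2) (by linarith) (by linarith) (by linarith)).2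
  have hsub : ∀ i, Icc (x i - ℓ / 2) (x i + ℓ / 2) ⊆ Icc (y - L / 2) (y + L / 2) := fun i ↦ by
    obtain ⟨h₁, h₂⟩ := abs_le.mp (hclose i)
    exact Icc_subset_Icc (by linarith) (by linarith)
  have hpack := (card_mul_le_measure_of_pairwise_disjoint μ (fun _ ↦ measurableSet_Icc)
    (fun i j hij ↦ Real.disjoint_Icc_of_lt_abs_sub (by linarith [hsep hij])) hsub hlower).trans
    hupper
  have hLδ : 0 < L ^ δ := Real.rpow_pos_of_pos (hℓ.trans_le hℓL) δ
  rwa [← ofReal_natCast, ← ofReal_mul (Nat.cast_nonneg _),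
    ofReal_le_ofReal_iff (by positivity)] at hpack

theorem stmt4 (X : Set ℝ) (μ : Measure ℝ) (δ CR amin amax : ℝ) (hδ1 : δ < 1) (hCR : 1 ≤ CR)
    (hreg : ∀ x ∈ X, ∀ r : ℝ, 0 < r → amin ≤ 2 * r → 2 * r ≤ amax →
      ENNReal.ofReal (CR⁻¹ * (2*r) ^ δ) ≤ μ (Set.Icc (x - r) (x + r)) ∧
      μ (Set.Icc (x - r) (x + r)) ≤ ENNReal.ofReal (CR * (2*r) ^ δ))
    (T : ℕ) (hT : 6 * CR ^ 2 < (T : ℝ) ^ (1 - δ)) :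
    IsPorous X (1 / (3 * T)) (3 * T * amin) amax := by
  have hCR0 : 0 < CR := by linarith
  have hT0 : 1 ≤ (T : ℝ) := Nat.one_le_cast_of_lt_rpow (by linarith) (by positivity) hT
  intro a b hab hmin hmax
  set ℓ := 1 / (3 * T) * (b - a) with hℓ
  have hℓ0 : 0 < ℓ := by have := sub_pos.mpr hab; positivity
  have hL : b - a = 3 * T * ℓ := by rw [hℓ]; field_simp
  by_contra! hmeets
  obtain ⟨x₀, hx₀X, hx₀⟩ := hmeets ((a + b) / 2 - ℓ / 2) ((a + b) / 2 + ℓ / 2)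
    (by nlinarith) (by nlinarith) (by ring)
  have hkT : ∀ k : Fin T, (k : ℝ) + 1 ≤ T := fun k ↦ by exact_mod_cast k.isLt
  choose x hxX hx using fun k : Fin T ↦
    hmeets (a + ℓ + 3 * k * ℓ) (a + ℓ + 3 * k * ℓ + ℓ)
      (by nlinarith [(k : ℕ).cast_nonneg (α := ℝ)]) (by nlinarith [hkT k]) (by ring)
  have hclose : ∀ k, |x k - x₀| ≤ (b - a - ℓ) / 2 := fun k ↦
    abs_le.mpr ⟨by nlinarith [(hx k).1, hx₀.2], by nlinarith [(hx k).2, hx₀.1, hkT k]⟩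
  have hpack := IsRegularOnScales.natCast_card_mul_le hreg hCR0.le hxX hx₀X hℓ0
    (le_of_mul_le_mul_left (hmin.trans_eq hL) (by positivity)) (by nlinarith) hmax
    (fun i j hij ↦ Real.lt_abs_sub_of_mem_Icc_add_three_mul hℓ0 (Fin.val_injective.ne hij)
      (hx i) (hx j)) hclose
  rw [Fintype.card_fin, hL] at hpack
  exact (Real.rpow_one_sub_le_three_mul_sq hCR0 (by positivity) hℓ0 hδ1.le hpack).not_gt
    (by linarith [sq_nonneg CR])
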